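/- arXiv:2408.08507 — 12 statements merged into one kernel-verified Lean document; each statement's English description precedes it below -/
import Mathlib

section
/- For any basis B = (b_1; ...; b_k) ∈ F_q^{k×n} of an [n,k]_q linear code C, the size of the support of C equals the sum of the Hamming weights of the epipodal vectors: |Supp(C)| = Σ_{i=1}^k |b_i^+|. -/
open Classical in
/-- The `i`-th epipodal vector of `B`: the projection of row `i` orthogonal to
the supports of the previous rows. -/
noncomputable def epipodal {F : Type} [Field F] {k n : ℕ}
    (B : Fin k → Fin n → F) (i : Fin k) : Fin n → F :=
  fun j => if ∃ m, m < i ∧ B m j ≠ 0 then 0 else B i j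

/-- The support of a code: the coordinates at which some codeword is nonzero. -/
def codeSupp {F : Type} [Field F] {n : ℕ} (C : Submodule F (Fin n → F)) : Set (Fin n) :=
  {j | ∃ c ∈ C, c j ≠ 0}

/-! The support of the epipodal vector `b_i⁺` is the set of coordinates at which `b_i` is the
first nonzero row. These sets are pairwise disjoint and cover the union of the row supports,
which is the support of the spanned code. -/

open Function

lemma hammingNorm_eq_ncard_support {ι β : Type*} [Fintype ι] [Zero β] [DecidableEq β]
    (x : ι → β) : hammingNorm x = (support x).ncard := by
  rw [hammingNorm, ← Set.ncard_coe_finset]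
  congr 1
  ext; simp

section
variable {F : Type} [Field F] {n : ℕ}

lemma codeSupp_span {ι : Type*} (v : ι → Fin n → F) :
    codeSupp (Submodule.span F (Set.range v)) = ⋃ i, support (v i) := by
  ext j
  simp only [codeSupp, Set.mem_ofPred_eq, Set.mem_iUnion, mem_support]
  constructor
  · rintro ⟨c, hc, hcj⟩
    by_contra! h
    have hker : Submodule.span F (Set.range v) ≤ LinearMap.ker (LinearMap.proj j) :=
      Submodule.span_le.2 (Set.range_subset_iff.2 h)
    exact hcj (hker hc)
  · rintro ⟨i, hi⟩
    exact ⟨v i, Submodule.subset_span ⟨i, rfl⟩, hi⟩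

variable {k : ℕ} (B : Fin k → Fin n → F)

lemma epipodal_ne_zero_iff {i : Fin k} {j : Fin n} :
    epipodal B i j ≠ 0 ↔ B i j ≠ 0 ∧ ∀ m < i, B m j = 0 := by
  unfold epipodal
  split_ifs with h <;> simp_all

lemma pairwise_disjoint_support_epipodal :
    Pairwise (Disjoint on fun i => support (epipodal B i)) := by
  intro i i' hne
  rw [onFun, Set.disjoint_left]
  intro j hj hj'
  rw [mem_support, epipodal_ne_zero_iff] at hj hj'
  rcases hne.lt_or_gt with hlt | hlt
  · exact hj.1 (hj'.2 i hlt)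
  · exact hj'.1 (hj.2 i' hlt)

lemma iUnion_support_epipodal : ⋃ i, support (epipodal B i) = ⋃ i, support (B i) := by
  ext j
  simp only [Set.mem_iUnion, mem_support]
  constructor
  · rintro ⟨i, hi⟩
    exact ⟨i, ((epipodal_ne_zero_iff B).1 hi).1⟩
  · rintro ⟨i, hi⟩
    obtain ⟨i₀, hi₀, hmin⟩ := wellFounded_lt.has_min {i | B i j ≠ 0} ⟨i, hi⟩
    refine ⟨i₀, (epipodal_ne_zero_iff B).2 ⟨hi₀, fun m hm => ?_⟩⟩
    by_contra hne
    exact hmin m hne hm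

end

theorem codeSupp_card_eq_sum_epipodal_general {F : Type} [Field F] [DecidableEq F]
    {n k : ℕ} (B : Fin k → Fin n → F)
    (C : Submodule F (Fin n → F)) (hC : C = Submodule.span F (Set.range B)) :
    (codeSupp C).ncard = ∑ i, hammingNorm (epipodal B i) := by
  rw [hC, codeSupp_span, ← iUnion_support_epipodal,
    Set.ncard_iUnion_of_finite (fun _ => Set.toFinite _) (pairwise_disjoint_support_epipodal B),
    finsum_eq_sum_of_fintype]
  simp only [hammingNorm_eq_ncard_support]

/-- The size of the support of a code equals the sum of the Hamming weights of
the epipodal vectors of any basis of the code. -/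
theorem codeSupp_card_eq_sum_epipodal {F : Type} [Field F] [Fintype F] [DecidableEq F]
    {n k : ℕ} (B : Fin k → Fin n → F) (hB : LinearIndependent F B)
    (C : Submodule F (Fin n → F)) (hC : C = Submodule.span F (Set.range B)) :
    (codeSupp C).ncard = ∑ i, hammingNorm (epipodal B i) :=
  codeSupp_card_eq_sum_epipodal_general B C hC
end

section
/- Any code C ⊆ F_q^n of dimension k ≥ 1 has a subcode C' of dimension k−1 whose support is a strict subset of the support of C. -/
open Module

theorem Submodule.finrank_inf_ker_add_one {K V : Type*} [DivisionRing K] [AddCommGroup V]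
    [Module K V] (p : Submodule K V) [FiniteDimensional K p] {f : Dual K V} {v : V}
    (hv : v ∈ p) (hfv : f v ≠ 0) :
    finrank K ↥(p ⊓ LinearMap.ker f) + 1 = finrank K p := by
  have hf : f.domRestrict p ≠ 0 := fun h ↦ hfv (LinearMap.congr_fun h ⟨v, hv⟩)
  rw [← Dual.finrank_ker_add_one_of_ne_zero hf, LinearMap.ker_domRestrict,
    ← Submodule.map_comap_subtype, Submodule.finrank_map_subtype_eq]

section codeSupp

variable {F : Type} [Field F] {n : ℕ}

theorem codeSupp_mono {C' C : Submodule F (Fin n → F)} (h : C' ≤ C) :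
    codeSupp C' ⊆ codeSupp C :=
  fun _ ⟨c, hc, hcj⟩ ↦ ⟨c, h hc, hcj⟩

theorem codeSupp_nonempty {C : Submodule F (Fin n → F)} (hC : C ≠ ⊥) :
    (codeSupp C).Nonempty := by
  obtain ⟨c, hc, hc0⟩ := Submodule.exists_mem_ne_zero_of_ne_bot hC
  obtain ⟨j, hcj⟩ := Function.ne_iff.mp hc0
  exact ⟨j, c, hc, hcj⟩

theorem notMem_codeSupp_inf_ker_proj (C : Submodule F (Fin n → F)) (j : Fin n) :
    j ∉ codeSupp (C ⊓ LinearMap.ker (LinearMap.proj j)) :=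
  fun ⟨_, hc, hcj⟩ ↦ hcj (LinearMap.mem_ker.mp hc.2)

end codeSupp

theorem exists_subcode_smaller_support_general {F : Type} [Field F] {n k : ℕ}
    (hk : 1 ≤ k) (C : Submodule F (Fin n → F)) (hC : Module.finrank F C = k) :
    ∃ C' : Submodule F (Fin n → F), C' ≤ C ∧ Module.finrank F C' = k - 1 ∧
      codeSupp C' ⊂ codeSupp C := by
  have hC0 : C ≠ ⊥ := by
    rintro rfl
    rw [finrank_bot] at hC
    omega
  obtain ⟨j, hj⟩ := codeSupp_nonempty hC0
  obtain ⟨c, hc, hcj⟩ := id hj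
  refine ⟨C ⊓ LinearMap.ker (LinearMap.proj j), inf_le_left, ?_,
    (Set.ssubset_iff_of_subset (codeSupp_mono inf_le_left)).mpr
      ⟨j, hj, notMem_codeSupp_inf_ker_proj C j⟩⟩
  have hdim := C.finrank_inf_ker_add_one (f := LinearMap.proj j) hc hcj
  omega

/-- Any code of dimension `k ≥ 1` has a subcode of dimension `k − 1` with
strictly smaller support. -/
theorem exists_subcode_smaller_support {F : Type} [Field F] [Fintype F] {n k : ℕ}
    (hk : 1 ≤ k) (C : Submodule F (Fin n → F)) (hC : Module.finrank F C = k) :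
    ∃ C' : Submodule F (Fin n → F), C' ≤ C ∧ Module.finrank F C' = k - 1 ∧
      codeSupp C' ⊂ codeSupp C :=
  exists_subcode_smaller_support_general hk C hC
end

section
/- A nonzero subcode C' ⊆ C ⊆ F_q^n is a primitive subcode of C if and only if there exists a set S ⊆ [n] of coordinates such that C' = {c ∈ C : c_i = 0 for all i ∈ S}. -/
/-- A nonzero subcode `C' ⊆ C` is primitive in `C` if there is no subcode of `C` of the
same dimension as `C'` whose support is a strict subset of the support of `C'`. -/
def IsPrimitiveSubcode {F : Type} [Field F] {n : ℕ}
    (C C' : Submodule F (Fin n → F)) : Prop :=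
  ¬∃ C'' : Submodule F (Fin n → F), C'' ≤ C ∧
    Module.finrank F C'' = Module.finrank F C' ∧ codeSupp C'' ⊂ codeSupp C'

variable {F : Type} [Field F]

section Elimination

variable {ι : Type*}

def coordElim (c : ι → F) (j : ι) : (ι → F) →ₗ[F] (ι → F) :=
  LinearMap.id - ((c j)⁻¹ • LinearMap.proj j).smulRight c

theorem coordElim_apply (c x : ι → F) (j : ι) : coordElim c j x = x - (x j / c j) • c := by
  simp [coordElim, div_eq_inv_mul]

theorem coordElim_apply_self {c : ι → F} {j : ι} (hc : c j ≠ 0) (x : ι → F) :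
    coordElim c j x j = 0 := by
  simp [coordElim_apply, div_mul_cancel₀ _ hc]

theorem coordElim_mem {M : Submodule F (ι → F)} {c x : ι → F} (j : ι) (hc : c ∈ M) (hx : x ∈ M) :
    coordElim c j x ∈ M := by
  rw [coordElim_apply]
  exact M.sub_mem hx (M.smul_mem _ hc)

theorem coordElim_injective_restrict {M : Submodule F (ι → F)} {c : ι → F} (hc : c ∉ M) (j : ι) :
    Function.Injective (coordElim c j ∘ₗ M.subtype) := by
  rw [← LinearMap.ker_eq_bot, Submodule.eq_bot_iff]
  rintro ⟨x, hx⟩ hx0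
  set t := x j / c j
  have hxc : x = t • c := sub_eq_zero.mp ((coordElim_apply c x j).symm.trans hx0)
  have ht : t = 0 := by
    by_contra ht
    have hcx : c = t⁻¹ • x := by rw [hxc, smul_smul, inv_mul_cancel₀ ht, one_smul]
    exact hc (hcx ▸ M.smul_mem _ hx)
  simpa [ht] using hxc

end Elimination

variable {n : ℕ}

def vanishingSubcode (C : Submodule F (Fin n → F)) (S : Set (Fin n)) : Submodule F (Fin n → F) :=
  C ⊓ ⨅ i ∈ S, LinearMap.ker (LinearMap.proj i)

theorem mem_vanishingSubcode {C : Submodule F (Fin n → F)} {S : Set (Fin n)} {c : Fin n → F} :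
    c ∈ vanishingSubcode C S ↔ c ∈ C ∧ ∀ i ∈ S, c i = 0 := by
  simp [vanishingSubcode]

theorem le_vanishingSubcode_compl_codeSupp {C C' : Submodule F (Fin n → F)} (hle : C' ≤ C) :
    C' ≤ vanishingSubcode C (codeSupp C')ᶜ :=
  fun c hc => mem_vanishingSubcode.mpr
    ⟨hle hc, fun _ hi => by_contra fun hci => hi ⟨c, hc, hci⟩⟩

theorem le_vanishingSubcode_of_codeSupp_subset {C D : Submodule F (Fin n → F)} {S : Set (Fin n)}
    (hD : D ≤ C) (hsupp : codeSupp D ⊆ codeSupp (vanishingSubcode C S)) :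
    D ≤ vanishingSubcode C S := by
  refine fun x hx => mem_vanishingSubcode.mpr ⟨hD hx, fun i hi => by_contra fun hxi => ?_⟩
  obtain ⟨y, hy, hyi⟩ := hsupp ⟨x, hx, hxi⟩
  exact hyi ((mem_vanishingSubcode.mp hy).2 i hi)

theorem isPrimitiveSubcode_vanishingSubcode (C : Submodule F (Fin n → F)) (S : Set (Fin n)) :
    IsPrimitiveSubcode C (vanishingSubcode C S) := by
  rintro ⟨D, hDC, hrank, hssub⟩
  have hDeq : D = vanishingSubcode C S :=
    Submodule.eq_of_le_of_finrank_eq (le_vanishingSubcode_of_codeSupp_subset hDC hssub.1) hrank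
  exact hssub.ne (congrArg codeSupp hDeq)

theorem exists_codeSupp_ssubset_of_notMem {C C' : Submodule F (Fin n → F)} (hle : C' ≤ C)
    {c : Fin n → F} (hcC : c ∈ C) (hc : c ∉ C') (hsupp : ∀ i, c i ≠ 0 → i ∈ codeSupp C') :
    ∃ C'' ≤ C, Module.finrank F C'' = Module.finrank F C' ∧ codeSupp C'' ⊂ codeSupp C' := by
  obtain ⟨j, hj⟩ : ∃ j, c j ≠ 0 := Function.ne_iff.mp fun h0 => hc (h0 ▸ C'.zero_mem)
  refine ⟨LinearMap.range (coordElim c j ∘ₗ C'.subtype), ?_,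
    LinearMap.finrank_range_of_inj (coordElim_injective_restrict hc j), ?_, ?_⟩
  · rintro _ ⟨x, rfl⟩
    exact coordElim_mem j hcC (hle x.2)
  · rintro i ⟨_, ⟨x, rfl⟩, hi⟩
    by_cases hxi : x.1 i = 0
    · refine hsupp i fun hci => hi ?_
      simp [coordElim_apply, hxi, hci]
    · exact ⟨x, x.2, hxi⟩
  · rintro hsub
    obtain ⟨_, ⟨x, rfl⟩, hx⟩ := hsub (hsupp j hj)
    exact hx (coordElim_apply_self hj x)

theorem primitiveSubcode_iff_general {F : Type} [Field F] {n : ℕ}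
    (C C' : Submodule F (Fin n → F)) (hle : C' ≤ C) :
    IsPrimitiveSubcode C C' ↔
      ∃ S : Set (Fin n), ∀ c : Fin n → F, c ∈ C' ↔ (c ∈ C ∧ ∀ i ∈ S, c i = 0) := by
  simp only [← mem_vanishingSubcode, ← SetLike.ext_iff]
  constructor
  · intro hprim
    refine ⟨(codeSupp C')ᶜ, le_antisymm (le_vanishingSubcode_compl_codeSupp hle) fun c hc => ?_⟩
    obtain ⟨hcC, hcS⟩ := mem_vanishingSubcode.mp hc
    by_contra hcC'
    exact hprim (exists_codeSupp_ssubset_of_notMem hle hcC hcC' fun i hci =>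
      by_contra fun hi => hci (hcS i hi))
  · rintro ⟨S, rfl⟩
    exact isPrimitiveSubcode_vanishingSubcode C S

/-- A nonzero subcode `C' ⊆ C` is primitive in `C` iff it is the set of codewords of `C`
vanishing on some set `S` of coordinates. -/
theorem primitiveSubcode_iff {F : Type} [Field F] [Fintype F] {n : ℕ}
    (C C' : Submodule F (Fin n → F)) (hle : C' ≤ C) (hne : C' ≠ ⊥) :
    IsPrimitiveSubcode C C' ↔
      ∃ S : Set (Fin n), ∀ c : Fin n → F, c ∈ C' ↔ (c ∈ C ∧ ∀ i ∈ S, c i = 0) :=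
  primitiveSubcode_iff_general C C' hle
end

section
/- For a nonzero codeword c in a k-dimensional code C ⊆ F_q^n, c is primitive in C if and only if the projection π⊥_c(C) orthogonal to the support of c is a (k−1)-dimensional code. -/
/-!
The kernel of `projPerpL c` on `C` consists of the codewords supported inside `Supp(c)`, and
it contains the line `F ∙ c`; by rank–nullity, `π⊥_c(C)` has dimension `k - 1` exactly when
this kernel is that line. If `c` is primitive and `y ∈ C` is supported inside `Supp(c)`, then
`y - (y j / c j) • c` vanishes at some `j ∈ Supp(c)`, so it is `0`; conversely a codeword with
support strictly inside `Supp(c)` cannot be a multiple of `c`.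
-/

/-- Projection orthogonal to the support of `x`, as a linear map. -/
def projPerpL {F : Type} [Field F] [DecidableEq F] {n : ℕ} (x : Fin n → F) :
    (Fin n → F) →ₗ[F] (Fin n → F) where
  toFun y := fun i => if x i = 0 then y i else 0
  map_add' y z := by funext i; by_cases h : x i = 0 <;> simp [h]
  map_smul' c y := by funext i; by_cases h : x i = 0 <;> simp [h]

/-- A nonzero codeword `c ∈ C` is primitive in `C` if no nonzero codeword of `C` has
support strictly contained in the support of `c`. -/
def IsPrimitive {F : Type} [Field F] {n : ℕ} (C : Submodule F (Fin n → F))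
    (c : Fin n → F) : Prop :=
  c ∈ C ∧ c ≠ 0 ∧ ¬∃ c' ∈ C, c' ≠ 0 ∧ {j | c' j ≠ 0} ⊂ {j | c j ≠ 0}

open Module Function Submodule LinearMap

theorem Submodule.finrank_map_add_finrank_inf_ker {K V V₂ : Type*} [DivisionRing K]
    [AddCommGroup V] [Module K V] [AddCommGroup V₂] [Module K V₂] (p : Submodule K V)
    [FiniteDimensional K p] (f : V →ₗ[K] V₂) :
    finrank K (p.map f) + finrank K ↥(p ⊓ ker f) = finrank K p := by
  have hker : finrank K (ker (f.domRestrict p)) = finrank K ↥(p ⊓ ker f) := by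
    rw [ker_domRestrict, ← map_comap_subtype]
    exact (equivMapOfInjective _ p.injective_subtype _).finrank_eq
  rw [← hker, ← range_domRestrict, finrank_range_add_finrank_ker]

section Support

variable {F : Type} [Field F] {n : ℕ}

theorem mem_ker_projPerpL_iff [DecidableEq F] {x y : Fin n → F} :
    y ∈ ker (projPerpL x) ↔ support y ⊆ support x := by
  simp only [mem_ker, funext_iff, projPerpL, LinearMap.coe_mk, AddHom.coe_mk, Pi.zero_apply]
  refine forall_congr' fun i => ?_
  by_cases hi : x i = 0 <;> simp [hi]

theorem span_singleton_le_inf_ker_projPerpL [DecidableEq F] {C : Submodule F (Fin n → F)}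
    {c : Fin n → F} (hc : c ∈ C) : (F ∙ c) ≤ C ⊓ ker (projPerpL c) :=
  (span_singleton_le_iff_mem _ _).mpr ⟨hc, mem_ker_projPerpL_iff.mpr subset_rfl⟩

theorem support_sub_smul_ssubset {α : Type*} {c y : α → F} (hy : support y ⊆ support c) {j : α}
    (hj : c j ≠ 0) : support (y - (y j / c j) • c) ⊂ support c := by
  refine ⟨fun i hi => ?_, fun hsub => hsub hj ?_⟩
  · rcases support_sub y _ hi with hi | hi
    · exact hy hi
    · exact support_smul_subset_right _ c hi
  · simp [div_mul_cancel₀ _ hj]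

theorem isPrimitive_iff_inf_ker_projPerpL_eq_span [DecidableEq F]
    {C : Submodule F (Fin n → F)} {c : Fin n → F} (hc : c ∈ C) (hc0 : c ≠ 0) :
    IsPrimitive C c ↔ C ⊓ ker (projPerpL c) = F ∙ c := by
  have hspan := span_singleton_le_inf_ker_projPerpL hc
  constructor
  · rintro ⟨-, -, hprim⟩
    refine le_antisymm (fun y ⟨hyC, hyker⟩ => ?_) hspan
    have hy := mem_ker_projPerpL_iff.mp hyker
    obtain ⟨j, hj⟩ := ne_iff.mp hc0
    have hzero : y - (y j / c j) • c = 0 := by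
      by_contra hz
      exact hprim ⟨_, C.sub_mem hyC (C.smul_mem _ hc), hz, support_sub_smul_ssubset hy hj⟩
    exact mem_span_singleton.mpr ⟨y j / c j, (sub_eq_zero.mp hzero).symm⟩
  · intro hker
    refine ⟨hc, hc0, fun ⟨c', hc'C, hc'0, hlt⟩ => ?_⟩
    have hc'span : c' ∈ F ∙ c := hker ▸ ⟨hc'C, mem_ker_projPerpL_iff.mpr hlt.subset⟩
    obtain ⟨a, rfl⟩ := mem_span_singleton.mp hc'span
    have ha : a ≠ 0 := by rintro rfl; exact hc'0 (zero_smul F c)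
    exact hlt.ne (support_const_smul_of_ne_zero a c ha)

end Support

theorem primitive_iff_proj_rank_general {F : Type} [Field F] [DecidableEq F]
    {n k : ℕ} (C : Submodule F (Fin n → F)) (hC : Module.finrank F C = k)
    (c : Fin n → F) (hc : c ∈ C) (hc0 : c ≠ 0) :
    IsPrimitive C c ↔ Module.finrank F (C.map (projPerpL c)) = k - 1 := by
  have hspan := span_singleton_le_inf_ker_projPerpL hc
  have hline := finrank_span_singleton (K := F) hc0
  have hker_pos := Submodule.finrank_mono hspan
  have hrank := C.finrank_map_add_finrank_inf_ker (projPerpL c)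
  rw [isPrimitive_iff_inf_ker_projPerpL_eq_span hc hc0]
  constructor
  · intro hker
    rw [hker] at hrank
    omega
  · intro hmap
    exact (eq_of_le_of_finrank_eq hspan (by omega)).symm

/-- A nonzero codeword `c` of a `k`-dimensional code `C` is primitive iff the projection
of `C` orthogonal to the support of `c` is a `(k−1)`-dimensional code. -/
theorem primitive_iff_proj_rank {F : Type} [Field F] [Fintype F] [DecidableEq F]
    {n k : ℕ} (C : Submodule F (Fin n → F)) (hC : Module.finrank F C = k)
    (c : Fin n → F) (hc : c ∈ C) (hc0 : c ≠ 0) :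
    IsPrimitive C c ↔ Module.finrank F (C.map (projPerpL c)) = k - 1 :=
  primitive_iff_proj_rank_general C hC c hc hc0
end

section
/- A basis B = (b_1; ...; b_k) of a code C ⊆ F_q^n is proper if and only if b_1 is a primitive codeword of C and the projected basis B_{[2,k]} = (π⊥_{b_1}(b_2); ...; π⊥_{b_1}(b_k)) is proper. -/
/-- A basis is proper if all its epipodal vectors are nonzero. -/
def IsProper {F : Type} [Field F] {k n : ℕ} (B : Fin k → Fin n → F) : Prop :=
  ∀ i, epipodal B i ≠ 0

open Function Submodule

section Epipodal

variable {F : Type} [Field F] {k n : ℕ}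

open Classical in
theorem epipodal_apply (B : Fin k → Fin n → F) (i : Fin k) (j : Fin n) :
    epipodal B i j = if ∀ m < i, B m j = 0 then B i j else 0 := by
  rw [epipodal, ← ite_not]
  exact if_congr (by simp) rfl rfl

theorem epipodal_apply_ne_zero_iff {B : Fin k → Fin n → F} {i : Fin k} {j : Fin n} :
    epipodal B i j ≠ 0 ↔ B i j ≠ 0 ∧ ∀ m < i, B m j = 0 := by
  rw [epipodal_apply]
  split_ifs with h
  · exact (and_iff_left h).symm
  · simpa using fun _ => h

theorem epipodal_zero (B : Fin (k + 1) → Fin n → F) : epipodal B 0 = B 0 := by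
  ext j
  simp [epipodal_apply]

/-- The projected basis `B_{[2,k]}`. -/
def projectedTail [DecidableEq F] (B : Fin (k + 1) → Fin n → F) : Fin k → Fin n → F :=
  fun i j => if B 0 j = 0 then B i.succ j else 0

theorem epipodal_projectedTail [DecidableEq F] (B : Fin (k + 1) → Fin n → F) (i : Fin k) :
    epipodal (projectedTail B) i = epipodal B i.succ := by
  ext j
  simp only [epipodal_apply, projectedTail, Fin.forall_fin_succ, Fin.succ_lt_succ_iff]
  by_cases h0 : B 0 j = 0 <;> simp [h0, Fin.succ_pos]

theorem isProper_projectedTail_iff [DecidableEq F] (B : Fin (k + 1) → Fin n → F) :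
    IsProper (projectedTail B) ↔ ∀ i : Fin k, epipodal B i.succ ≠ 0 := by
  simp only [IsProper, epipodal_projectedTail]

theorem isProper_iff_forall_fin_succ (B : Fin (k + 1) → Fin n → F) :
    IsProper B ↔ B 0 ≠ 0 ∧ ∀ i : Fin k, epipodal B i.succ ≠ 0 := by
  rw [IsProper, Fin.forall_fin_succ, epipodal_zero]

theorem apply_sum_smul_of_epipodal_ne_zero (B : Fin k → Fin n → F) (a : Fin k → F)
    {i : Fin k} (ha : ∀ m, i < m → a m = 0) {j : Fin n} (hj : epipodal B i j ≠ 0) :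
    (∑ m, a m • B m) j = a i * B i j := by
  have hB := (epipodal_apply_ne_zero_iff.1 hj).2
  rw [Finset.sum_apply, Finset.sum_eq_single i]
  · rfl
  · intro m _ hmi
    rcases hmi.lt_or_gt with hm | hm
    · simp [hB m hm]
    · simp [ha m hm]
  · simp

end Epipodal

theorem exists_ne_zero_forall_gt_eq_zero {ι M : Type*} [Finite ι] [LinearOrder ι] [Zero M]
    {a : ι → M} (ha : a ≠ 0) : ∃ i, a i ≠ 0 ∧ ∀ m, i < m → a m = 0 := by
  obtain ⟨i, hi, hmax⟩ :=
    Set.exists_max_image (support a) id (Set.toFinite _) (support_nonempty_iff.2 ha)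
  exact ⟨i, hi, fun m hm => by_contra fun hm0 => (hmax m hm0).not_gt hm⟩

theorem isPrimitive_head_of_isProper {F : Type} [Field F] {k n : ℕ}
    {B : Fin (k + 1) → Fin n → F} (hB : IsProper B) :
    IsPrimitive (span F (Set.range B)) (B 0) := by
  refine ⟨subset_span ⟨0, rfl⟩, epipodal_zero B ▸ hB 0, ?_⟩
  rintro ⟨c, hc, hc0, hsub⟩
  obtain ⟨a, rfl⟩ := (mem_span_range_iff_exists_fun F).1 hc
  have ha : a ≠ 0 := by
    rintro rfl
    simp at hc0
  obtain ⟨i, hai, hlast⟩ := exists_ne_zero_forall_gt_eq_zero ha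
  cases i using Fin.cases with
  | zero =>
    have hc_eq : ∑ m, a m • B m = a 0 • B 0 :=
      Finset.sum_eq_single 0 (fun m _ hm => by rw [hlast m (Fin.pos_iff_ne_zero.2 hm), zero_smul])
        (by simp)
    rw [hc_eq] at hsub
    exact hsub.ne (support_const_smul_of_ne_zero _ _ hai)
  | succ i =>
    obtain ⟨j, hj⟩ := Function.ne_iff.1 (hB i.succ)
    have hcj := apply_sum_smul_of_epipodal_ne_zero B a hlast hj
    have hB0j : B 0 j = 0 := (epipodal_apply_ne_zero_iff.1 hj).2 0 i.succ_pos
    refine hsub.subset ?_ hB0j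
    change (∑ m, a m • B m) j ≠ 0
    rw [hcj]
    exact mul_ne_zero hai (epipodal_apply_ne_zero_iff.1 hj).1

theorem proper_iff_primitive_head_and_proper_tail_general {F : Type} [Field F]
    [DecidableEq F] {k n : ℕ} (B : Fin (k + 1) → Fin n → F) :
    IsProper B ↔
      (IsPrimitive (Submodule.span F (Set.range B)) (B 0) ∧
        IsProper (fun (i : Fin k) (j : Fin n) =>
          if B 0 j = 0 then B i.succ j else 0)) := by
  change IsProper B ↔ IsPrimitive _ (B 0) ∧ IsProper (projectedTail B)
  rw [isProper_projectedTail_iff]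
  refine ⟨fun hB => ⟨isPrimitive_head_of_isProper hB, ((isProper_iff_forall_fin_succ B).1 hB).2⟩,
    fun ⟨hprim, htail⟩ => (isProper_iff_forall_fin_succ B).2 ⟨hprim.2.1, htail⟩⟩

/-- A basis `B = (b_1; …; b_k)` of a code `C` is proper iff `b_1` is a primitive
codeword of `C` and the projected basis `B_{[2,k]}` is proper. -/
theorem proper_iff_primitive_head_and_proper_tail {F : Type} [Field F] [Fintype F]
    [DecidableEq F] {k n : ℕ} (B : Fin (k + 1) → Fin n → F)
    (hB : LinearIndependent F B) :
    IsProper B ↔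
      (IsPrimitive (Submodule.span F (Set.range B)) (B 0) ∧
        IsProper (fun (i : Fin k) (j : Fin n) =>
          if B 0 j = 0 then B i.succ j else 0)) :=
  proper_iff_primitive_head_and_proper_tail_general B
end

section
/- Let B = (b_1; ...; b_k) ∈ F_q^{k×n} be a basis, c ∈ F_q, and 1 ≤ i < j ≤ k. If B' is obtained from B by replacing b_j with b_j + c·b_i, then every epipodal vector of B' equals the corresponding epipodal vector of B. -/
theorem epipodal_apply_congr {F : Type} [Field F] {k n : ℕ} {B B' : Fin k → Fin n → F}
    {m : Fin k} {x : Fin n} (h : ∀ l ≤ m, B' l x = B l x) :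
    epipodal B' m x = epipodal B m x := by
  have hsupp : (∃ l, l < m ∧ B' l x ≠ 0) ↔ (∃ l, l < m ∧ B l x ≠ 0) :=
    exists_congr fun l => and_congr_right fun hl => by rw [h l hl.le]
  classical
  unfold epipodal
  exact if_congr hsupp rfl (h m le_rfl)

theorem epipodal_apply_eq_zero_of_lt {F : Type} [Field F] {k n : ℕ} {B : Fin k → Fin n → F}
    {i m : Fin k} {x : Fin n} (hix : B i x ≠ 0) (him : i < m) : epipodal B m x = 0 :=
  if_pos ⟨i, him, hix⟩

theorem epipodal_update_add_smul_general {F : Type} [Field F] {k n : ℕ}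
    (B : Fin k → Fin n → F) (c : F) (i j : Fin k) (hij : i < j) :
    ∀ m, epipodal (Function.update B j (B j + c • B i)) m = epipodal B m := by
  intro m
  funext x
  set B' := Function.update B j (B j + c • B i)
  have hB'_of_ne : ∀ l ≠ j, B' l = B l := fun l hl => Function.update_of_ne hl _ _
  by_cases hix : B i x = 0
  · refine epipodal_apply_congr fun l _ => ?_
    rcases eq_or_ne l j with rfl | hl
    · simp [B', hix]
    · rw [hB'_of_ne l hl]
  rcases lt_or_ge i m with him | hmi
  · have hB'ix : B' i x ≠ 0 := by rwa [hB'_of_ne i hij.ne]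
    rw [epipodal_apply_eq_zero_of_lt hix him, epipodal_apply_eq_zero_of_lt hB'ix him]
  · exact epipodal_apply_congr fun l hl => by
      rw [hB'_of_ne l (hl.trans_lt (hmi.trans_lt hij)).ne]

/-- Replacing `b_j` by `b_j + c·b_i` for `i < j` does not change any epipodal vector. -/
theorem epipodal_update_add_smul {F : Type} [Field F] [Fintype F] {k n : ℕ}
    (B : Fin k → Fin n → F) (c : F) (i j : Fin k) (hij : i < j) :
    ∀ m, epipodal (Function.update B j (B j + c • B i)) m = epipodal B m :=
  epipodal_update_add_smul_general B c i j hij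
end

section
/- Let B ∈ F_q^{k×n} be a basis, 1 ≤ i ≤ j ≤ k, and A ∈ F_q^{(j−i+1)×(j−i+1)} invertible. If B' := (I_{i−1} ⊕ A ⊕ I_{k−j}) B, then Σ_{m=i}^{j} |(b'_m)^+| = Σ_{m=i}^{j} |b_m^+|. -/
open Classical in
/-- Apply the block-diagonal transformation `I_a ⊕ A ⊕ I_c` to the rows of `B`. -/
noncomputable def applyBlock {F : Type} [Field F] {a b c n : ℕ}
    (A : Matrix (Fin b) (Fin b) F) (B : Fin (a + b + c) → Fin n → F) :
    Fin (a + b + c) → Fin n → F :=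
  fun m =>
    if h : (m : ℕ) < a ∨ a + b ≤ (m : ℕ) then B m
    else ∑ t : Fin b, A ⟨(m : ℕ) - a, by omega⟩ t • B ⟨a + (t : ℕ), by omega⟩

/-!
The epipodal vector `b_i^+` is supported exactly on the columns whose first nonzero entry lies in
row `i`. Hence the weights of the rows `a, …, a + b - 1` add up to the number of columns that are
nonzero somewhere in the first `a + b` rows, minus the number of those nonzero somewhere in the
first `a` rows. The transformation leaves the first `a` rows alone and multiplies the block part
of each column by the invertible `A`, so it vanishes exactly when it did before: both counts are
unchanged.
-/

open Finset Matrix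

section

variable {F : Type} [Field F] {k n : ℕ}

section

variable {a b c : ℕ} (A : Matrix (Fin b) (Fin b) F) (B : Fin (a + b + c) → Fin n → F)

lemma applyBlock_of_lt {m : Fin (a + b + c)} (hm : (m : ℕ) < a) : applyBlock A B m = B m :=
  dif_pos (Or.inl hm)

lemma applyBlock_block (t : Fin b) (j : Fin n) :
    applyBlock A B ⟨a + t, Nat.lt_add_right c (Nat.add_lt_add_left t.2 a)⟩ j =
      (A *ᵥ fun s => B ⟨a + s, Nat.lt_add_right c (Nat.add_lt_add_left s.2 a)⟩ j) t := by
  simp only [applyBlock]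
  rw [dif_neg (by omega)]
  simp [mulVec, dotProduct]

end

variable [DecidableEq F]

def prefixSupport (C : Fin k → Fin n → F) (p : ℕ) : Finset (Fin n) :=
  {j | ∃ m : Fin k, (m : ℕ) < p ∧ C m j ≠ 0}

lemma mem_prefixSupport {C : Fin k → Fin n → F} {p : ℕ} {j : Fin n} :
    j ∈ prefixSupport C p ↔ ∃ m : Fin k, (m : ℕ) < p ∧ C m j ≠ 0 := by
  simp [prefixSupport]

lemma epipodal_ne_zero_iff_s10 (C : Fin k → Fin n → F) (i : Fin k) (j : Fin n) :
    epipodal C i j ≠ 0 ↔ C i j ≠ 0 ∧ j ∉ prefixSupport C i := by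
  rw [mem_prefixSupport, epipodal]
  split_ifs with h <;> simp [h]

lemma prefixSupport_succ (C : Fin k → Fin n → F) (i : Fin k) :
    prefixSupport C (i + 1) = ({j | C i j ≠ 0} : Finset (Fin n)) ∪ prefixSupport C i := by
  ext j
  simp only [mem_prefixSupport, mem_union, mem_filter, mem_univ, true_and,
    Nat.lt_succ_iff_lt_or_eq, or_and_right, exists_or, Fin.val_inj, exists_eq_left]
  exact or_comm

lemma card_prefixSupport_succ (C : Fin k → Fin n → F) (i : Fin k) :
    #(prefixSupport C (i + 1)) = #(prefixSupport C i) + hammingNorm (epipodal C i) := by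
  have hsupp : ({j | epipodal C i j ≠ 0} : Finset (Fin n)) =
      ({j | C i j ≠ 0} : Finset (Fin n)) \ prefixSupport C i := by
    ext j
    simp [epipodal_ne_zero_iff_s10]
  rw [prefixSupport_succ, ← card_sdiff_add_card, hammingNorm, hsupp, add_comm]

lemma card_prefixSupport_add (C : Fin k → Fin n → F) {a b : ℕ} (h : a + b ≤ k) :
    #(prefixSupport C (a + b)) =
      #(prefixSupport C a) + ∑ t : Fin b, hammingNorm (epipodal C ⟨a + t, by omega⟩) := by
  induction b with
  | zero => simp
  | succ b ih =>
    have hsucc := card_prefixSupport_succ C ⟨a + b, by omega⟩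
    have hprev := ih (by omega)
    rw [Fin.sum_univ_castSucc]
    simp only [Fin.val_castSucc, Fin.val_last, ← add_assoc] at hsucc ⊢
    omega

lemma mem_prefixSupport_add_iff (C : Fin k → Fin n → F) {a b : ℕ} (h : a + b ≤ k) (j : Fin n) :
    j ∈ prefixSupport C (a + b) ↔
      j ∈ prefixSupport C a ∨ (fun t : Fin b => C ⟨a + t, by omega⟩ j) ≠ 0 := by
  simp only [mem_prefixSupport, ne_eq, funext_iff, Pi.zero_apply, not_forall]
  constructor
  · rintro ⟨m, hm, hne⟩
    by_cases hma : (m : ℕ) < a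
    · exact Or.inl ⟨m, hma, hne⟩
    · refine Or.inr ⟨⟨m - a, by omega⟩, ?_⟩
      rwa [show (⟨a + (m - a), _⟩ : Fin k) = m from Fin.ext (by simp; omega)]
  · rintro (⟨m, hm, hne⟩ | ⟨t, hne⟩)
    · exact ⟨m, by omega, hne⟩
    · exact ⟨_, by simp, hne⟩

lemma prefixSupport_applyBlock_of_le {a b c : ℕ} (A : Matrix (Fin b) (Fin b) F)
    (B : Fin (a + b + c) → Fin n → F) {p : ℕ} (hp : p ≤ a) :
    prefixSupport (applyBlock A B) p = prefixSupport B p := by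
  ext j
  simp only [mem_prefixSupport]
  refine exists_congr fun m => and_congr_right fun hm => ?_
  rw [applyBlock_of_lt A B (by omega)]

lemma prefixSupport_applyBlock_add {a b c : ℕ} (A : Matrix (Fin b) (Fin b) F)
    (B : Fin (a + b + c) → Fin n → F) (hA : IsUnit A) :
    prefixSupport (applyBlock A B) (a + b) = prefixSupport B (a + b) := by
  ext j
  have hcol : (fun t : Fin b => applyBlock A B ⟨a + t, by omega⟩ j) =
      A *ᵥ fun s => B ⟨a + s, by omega⟩ j :=
    funext (applyBlock_block A B · j)
  rw [mem_prefixSupport_add_iff _ (by omega), mem_prefixSupport_add_iff _ (by omega),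
    prefixSupport_applyBlock_of_le A B le_rfl, hcol,
    (mulVec_injective_of_isUnit hA).ne_iff' (mulVec_zero A)]

end

/-- Applying an invertible block-diagonal transformation `I_{i−1} ⊕ A ⊕ I_{k−j}` preserves
the sum of the Hamming weights of the epipodal vectors within the block
(here `a = i − 1`, `b = j − i + 1 ≥ 1`, `c = k − j`). -/
theorem sum_epipodal_weights_applyBlock {F : Type} [Field F] [DecidableEq F]
    {a b c n : ℕ} (A : Matrix (Fin b) (Fin b) F) (hA : IsUnit A)
    (B : Fin (a + b + c) → Fin n → F) :
    ∑ t : Fin b, hammingNorm (epipodal (applyBlock A B) ⟨a + (t : ℕ), by omega⟩) =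
      ∑ t : Fin b, hammingNorm (epipodal B ⟨a + (t : ℕ), by omega⟩) := by
  have hB := card_prefixSupport_add B (Nat.le_add_right (a + b) c)
  have hAB := card_prefixSupport_add (applyBlock A B) (Nat.le_add_right (a + b) c)
  rw [prefixSupport_applyBlock_add A B hA, prefixSupport_applyBlock_of_le A B le_rfl] at hAB
  omega
end

section
/- For a code C ⊆ F_q^n, a set S ⊆ Supp(C) is redundant for C if and only if for every i, j ∈ S there exists a nonzero scalar a ∈ F_q* such that c_j = a·c_i for all codewords c ∈ C. -/
/-- A set `S` of coordinates is redundant for `C` if `S ⊆ Supp(C)` and for every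
codeword `c` and all `i, j ∈ S`, `c i = 0` iff `c j = 0`. -/
def Redundant {F : Type} [Field F] {n : ℕ} (C : Submodule F (Fin n → F))
    (S : Set (Fin n)) : Prop :=
  S ⊆ codeSupp C ∧ ∀ c ∈ C, ∀ i ∈ S, ∀ j ∈ S, (c i = 0 ↔ c j = 0)

theorem Submodule.exists_apply_eq_mul_apply_of_apply_eq_zero_imp {F ι : Type*} [Field F]
    {C : Submodule F (ι → F)} {i j : ι} (h : ∀ c ∈ C, c i = 0 → c j = 0) :
    ∃ a : F, ∀ c ∈ C, c j = a * c i := by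
  by_cases hsupp : ∃ c₀ ∈ C, c₀ i ≠ 0
  · obtain ⟨c₀, hc₀, hc₀i⟩ := hsupp
    refine ⟨c₀ j / c₀ i, fun c hc => ?_⟩
    -- `c - (c i / c₀ i) • c₀` is a codeword vanishing at `i`, hence at `j`.
    have hdiff := h (c - (c i / c₀ i) • c₀) (C.sub_mem hc (C.smul_mem _ hc₀))
      (by simp [div_mul_cancel₀ _ hc₀i])
    simp only [Pi.sub_apply, Pi.smul_apply, smul_eq_mul, sub_eq_zero] at hdiff
    rw [hdiff, div_mul_comm]
  · push Not at hsupp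
    exact ⟨0, fun c hc => by rw [h c hc (hsupp c hc), zero_mul]⟩

theorem redundant_iff_scalar_general {F : Type} [Field F] {n : ℕ}
    (C : Submodule F (Fin n → F)) (S : Set (Fin n)) (hS : S ⊆ codeSupp C) :
    Redundant C S ↔
      ∀ i ∈ S, ∀ j ∈ S, ∃ a : F, a ≠ 0 ∧ ∀ c ∈ C, c j = a * c i := by
  constructor
  · rintro ⟨-, hred⟩ i hi j hj
    obtain ⟨a, ha⟩ := Submodule.exists_apply_eq_mul_apply_of_apply_eq_zero_imp
      fun c hc => (hred c hc i hi j hj).mp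
    obtain ⟨c, hc, hcj⟩ := hS hj
    exact ⟨a, fun ha0 => hcj (by rw [ha c hc, ha0, zero_mul]), ha⟩
  · intro hscalar
    refine ⟨hS, fun c hc i hi j hj => ⟨fun hci => ?_, fun hcj => ?_⟩⟩
    · obtain ⟨a, -, ha⟩ := hscalar i hi j hj
      rw [ha c hc, hci, mul_zero]
    · obtain ⟨b, -, hb⟩ := hscalar j hj i hi
      rw [hb c hc, hcj, mul_zero]

/-- A set `S ⊆ Supp(C)` is redundant for `C` iff for every `i, j ∈ S` there is a nonzero
scalar `a` with `c j = a · c i` for all codewords `c ∈ C`. -/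
theorem redundant_iff_scalar {F : Type} [Field F] [Fintype F] {n : ℕ}
    (C : Submodule F (Fin n → F)) (S : Set (Fin n)) (hS : S ⊆ codeSupp C) :
    Redundant C S ↔
      ∀ i ∈ S, ∀ j ∈ S, ∃ a : F, a ≠ 0 ∧ ∀ c ∈ C, c j = a * c i :=
  redundant_iff_scalar_general C S hS
end

section
/- If B = (b_1; ...; b_k) ∈ F_q^{k×n} is an LLL-reduced basis, then for all 1 ≤ i ≤ k−1, |b_{i+1}^+| ≥ ⌈|b_i^+| / q⌉. -/
/-!
Put `u = b_i^+` and `v = π_i(b_{i+1})`, so that `b_{i+1}^+` is `v` zeroed out on the support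
of `u`. Since `b_{i+1}^+ ≠ 0`, every word `c • u + v` is nonzero and hence weighs at least `|u|`.
Summing over the `q` scalars `c`, each coordinate in the support of `u` is killed by exactly one
`c` and each coordinate in the support of `b_{i+1}^+` by none, so
`(q + 1) |u| ≤ q (|u| + |b_{i+1}^+|)`, i.e. `|u| ≤ q |b_{i+1}^+|`.
-/

open Classical in
/-- `projRow B i m` is `π_i(b_m)`: row `m` of `B` projected orthogonally to the supports
of rows `0, …, i−1`.  In particular `projRow B i i` is the `i`-th epipodal vector. -/
noncomputable def projRow {F : Type} [Field F] {k n : ℕ}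
    (B : Fin k → Fin n → F) (i m : Fin k) : Fin n → F :=
  fun j => if ∃ t, t < i ∧ B t j ≠ 0 then 0 else B m j

/-- A basis is LLL-reduced if it is proper and each epipodal vector `b_i^+` is a shortest
nonzero codeword of the two-dimensional code generated by `B_{[i,i+1]}`. -/
def IsLLLReduced {F : Type} [Field F] [Fintype F] [DecidableEq F] {k n : ℕ}
    (B : Fin k → Fin n → F) : Prop :=
  (∀ i, projRow B i i ≠ 0) ∧
  ∀ i : Fin k, ∀ hi : (i : ℕ) + 1 < k,
    ∀ c ∈ Submodule.span F {projRow B i i, projRow B i ⟨(i : ℕ) + 1, hi⟩},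
      c ≠ 0 → hammingNorm (projRow B i i) ≤ hammingNorm c

open Finset

section Counting

variable {F : Type*} [Field F] [Fintype F] [DecidableEq F]

theorem card_filter_mul_add_ne_zero_add (a b : F) :
    #{c : F | c * a + b ≠ 0} + (if a ≠ 0 then 1 else 0) =
      Fintype.card F * (if a ≠ 0 ∨ b ≠ 0 then 1 else 0) := by
  by_cases ha : a = 0
  · by_cases hb : b = 0 <;> simp [ha, hb]
  · have hroot : ∀ c : F, c * a + b ≠ 0 ↔ c ≠ -b / a := fun c => by
      rw [ne_eq, ne_eq, eq_div_iff ha, ← eq_neg_iff_add_eq_zero]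
    have hcard : 0 < Fintype.card F := Fintype.card_pos
    simp only [hroot, filter_ne', card_erase_of_mem (mem_univ _), card_univ, ha, ne_eq,
      not_false_eq_true, true_or, if_true, mul_one]
    omega

variable {ι : Type*} [Fintype ι]

theorem sum_hammingNorm_smul_add_add_hammingNorm (u v : ι → F) :
    ∑ c : F, hammingNorm (c • u + v) + hammingNorm u =
      Fintype.card F * #{j | u j ≠ 0 ∨ v j ≠ 0} := by
  simp only [hammingNorm, card_filter, Pi.add_apply, Pi.smul_apply, smul_eq_mul]
  rw [sum_comm, ← sum_add_distrib, mul_sum]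
  refine sum_congr rfl fun j _ => ?_
  rw [← card_filter_mul_add_ne_zero_add, card_filter]

theorem hammingNorm_le_card_mul_of_isShortest (u v w : ι → F)
    (hw : ∀ j, w j ≠ 0 ↔ u j = 0 ∧ v j ≠ 0) (hw0 : w ≠ 0)
    (hmin : ∀ c ∈ Submodule.span F {u, v}, c ≠ 0 → hammingNorm u ≤ hammingNorm c) :
    hammingNorm u ≤ Fintype.card F * hammingNorm w := by
  have hsupp : #{j | u j ≠ 0 ∨ v j ≠ 0} = hammingNorm u + hammingNorm w := by
    simp only [hammingNorm, card_filter, ← sum_add_distrib]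
    refine sum_congr rfl fun j _ => ?_
    have := hw j
    split_ifs <;> tauto
  have hshort : ∀ c : F, hammingNorm u ≤ hammingNorm (c • u + v) := fun c => by
    obtain ⟨j, hj⟩ := Function.ne_iff.1 hw0
    obtain ⟨huj, hvj⟩ := (hw j).1 hj
    refine hmin _ (Submodule.add_mem _ (Submodule.smul_mem _ _ (Submodule.subset_span
      (Set.mem_insert _ _))) (Submodule.subset_span (Set.mem_insert_of_mem _ rfl))) ?_
    exact Function.ne_iff.2 ⟨j, by simpa [huj] using hvj⟩
  have havg : Fintype.card F * hammingNorm u + hammingNorm u ≤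
      Fintype.card F * (hammingNorm u + hammingNorm w) := by
    calc Fintype.card F * hammingNorm u + hammingNorm u
        = ∑ _c : F, hammingNorm u + hammingNorm u := by simp
      _ ≤ ∑ c : F, hammingNorm (c • u + v) + hammingNorm u := by gcongr with c; exact hshort c
      _ = _ := by rw [sum_hammingNorm_smul_add_add_hammingNorm, hsupp]
  rw [mul_add] at havg
  omega

end Counting

theorem projRow_succ {F : Type} [Field F] [DecidableEq F] {k n : ℕ} (B : Fin k → Fin n → F)
    (i : Fin k) (hi : (i : ℕ) + 1 < k) (m : Fin k) (j : Fin n) :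
    projRow B ⟨(i : ℕ) + 1, hi⟩ m j = if projRow B i i j ≠ 0 then 0 else projRow B i m j := by
  have hlt : ∀ t : Fin k, t < ⟨(i : ℕ) + 1, hi⟩ ↔ t < i ∨ t = i := fun t => by
    simp only [Fin.lt_def, Fin.ext_iff]
    omega
  simp only [projRow, hlt, or_and_right, exists_or, exists_eq_left]
  split_ifs <;> simp_all

/-- For an LLL-reduced basis, `|b_{i+1}^+| ≥ ⌈|b_i^+| / q⌉`. -/
theorem lll_epipodal_decay {F : Type} [Field F] [Fintype F] [DecidableEq F]
    {k n q : ℕ} (hq : Fintype.card F = q) (B : Fin k → Fin n → F)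
    (hB : IsLLLReduced B) (i : Fin k) (hi : (i : ℕ) + 1 < k) :
    ⌈(hammingNorm (projRow B i i) : ℚ) / q⌉₊ ≤
      hammingNorm (projRow B ⟨(i : ℕ) + 1, hi⟩ ⟨(i : ℕ) + 1, hi⟩) := by
  obtain ⟨hproper, hshortest⟩ := hB
  have hw : ∀ j, projRow B ⟨(i : ℕ) + 1, hi⟩ ⟨(i : ℕ) + 1, hi⟩ j ≠ 0 ↔
      projRow B i i j = 0 ∧ projRow B i ⟨(i : ℕ) + 1, hi⟩ j ≠ 0 := fun j => by
    rw [projRow_succ]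
    split_ifs <;> simp_all
  have hdecay := hammingNorm_le_card_mul_of_isShortest _ _ _ hw (hproper _) (hshortest i hi)
  subst hq
  rw [Nat.ceil_le, div_le_iff₀ (by exact_mod_cast Fintype.card_pos)]
  exact_mod_cast hdecay.trans_eq (mul_comm _ _)
end

section
/- If B = (b_1; ...; b_k) ∈ F_q^{k×n} is an LLL-reduced basis, then n ≥ Σ_{i=0}^{k−1} ⌈|b_1| / q^i⌉ (the Griesmer bound). -/
/-!
The epipodal vectors `b_i^+` have pairwise disjoint supports, so their weights sum to at most
`n`. Reducedness of the pair `(b_i, b_{i+1})` gives `|b_i^+| ≤ q |b_{i+1}^+|`, hence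
`|b_i^+| ≥ |b_1| / q^i`, and the integer `|b_i^+|` dominates the ceiling.
-/

open Finset

theorem Finset.exists_card_le_mul_card_fiber {α β : Type*} [DecidableEq β] [Fintype β]
    [Nonempty β] (s : Finset α) (f : α → β) :
    ∃ y, #s ≤ Fintype.card β * #{x ∈ s | f x = y} := by
  by_contra! h
  have hfib : #s = ∑ y, #{x ∈ s | f x = y} :=
    card_eq_sum_card_fiberwise fun x _ => mem_univ (f x)
  have : Fintype.card β * #s < Fintype.card β * #s :=
    calc Fintype.card β * #s = ∑ y, Fintype.card β * #{x ∈ s | f x = y} := by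
          rw [hfib, mul_sum]
      _ < ∑ _y : β, #s := sum_lt_sum_of_nonempty univ_nonempty fun y _ => h y
      _ = Fintype.card β * #s := by rw [sum_const, smul_eq_mul, card_univ]
  exact lt_irrefl _ this

theorem hammingNorm_sub_smul_add_card {ι F : Type*} [Fintype ι] [Field F] [DecidableEq F]
    (b b' : ι → F) (a : F) :
    hammingNorm (b' - a • b) + #{j | b j ≠ 0 ∧ b' j = a * b j} =
      hammingNorm b + #{j | b j = 0 ∧ b' j ≠ 0} := by
  simp only [hammingNorm, card_filter, ← sum_add_distrib]
  refine sum_congr rfl fun j _ => ?_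
  by_cases hb : b j = 0
  · simp [hb]
  · by_cases hb' : b' j = a * b j <;> simp [hb, hb', sub_eq_zero]

theorem exists_hammingNorm_le_card_mul_card_agree {ι F : Type*} [Fintype ι] [Field F]
    [Fintype F] [DecidableEq F] (b b' : ι → F) :
    ∃ a : F, hammingNorm b ≤ Fintype.card F * #{j | b j ≠ 0 ∧ b' j = a * b j} := by
  obtain ⟨a, ha⟩ := exists_card_le_mul_card_fiber {j | b j ≠ 0} fun j => b' j / b j
  refine ⟨a, ha.trans_eq ?_⟩
  rw [filter_filter]
  congr 2
  ext j
  simp only [mem_filter, mem_univ, true_and]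
  exact and_congr_right fun hbj => div_eq_iff hbj

/-- If `b` is a shortest nonzero word of `span {b, b'}`, then `|b| ≤ q · |b'|` off the support
of `b`: the best multiple `a • b` agrees with `b'` on a `1/q` share of `supp b`, and `b' - a • b`
is not shorter than `b`. -/
theorem hammingNorm_le_card_mul_of_shortest {ι F : Type*} [Fintype ι] [Field F] [Fintype F]
    [DecidableEq F] {b b' : ι → F}
    (hmin : ∀ c ∈ Submodule.span F {b, b'}, c ≠ 0 → hammingNorm b ≤ hammingNorm c)
    (hb' : #{j | b j = 0 ∧ b' j ≠ 0} ≠ 0) :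
    hammingNorm b ≤ Fintype.card F * #{j | b j = 0 ∧ b' j ≠ 0} := by
  obtain ⟨a, hagree⟩ := exists_hammingNorm_le_card_mul_card_agree b b'
  have hcount := hammingNorm_sub_smul_add_card b b' a
  have hagree_le : #{j | b j ≠ 0 ∧ b' j = a * b j} ≤ hammingNorm b :=
    card_le_card (monotone_filter_right _ fun _ _ h => h.1)
  have hc : b' - a • b ≠ 0 := by
    intro hc
    rw [hc, hammingNorm_zero] at hcount
    omega
  have hc_long := hmin _ (Submodule.sub_mem _
    (Submodule.subset_span (Set.mem_insert_of_mem _ (Set.mem_singleton _)))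
    (Submodule.smul_mem _ _ (Submodule.subset_span (Set.mem_insert _ _)))) hc
  exact hagree.trans (Nat.mul_le_mul_left _ (by omega))

section projRow

variable {F : Type} [Field F] {k n : ℕ} (B : Fin k → Fin n → F)

theorem projRow_apply_eq_zero {i m t : Fin k} {j : Fin n} (ht : t < i) (hj : B t j ≠ 0) :
    projRow B i m j = 0 :=
  if_pos ⟨t, ht, hj⟩

theorem apply_ne_zero_of_projRow_ne_zero {i m : Fin k} {j : Fin n} (h : projRow B i m j ≠ 0) :
    B m j ≠ 0 := by
  unfold projRow at h
  split_ifs at h with hc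
  exacts [absurd rfl h, h]

theorem projRow_zero (hk : 0 < k) (m : Fin k) : projRow B ⟨0, hk⟩ m = B m := by
  funext j
  exact if_neg fun ⟨t, ht, _⟩ => Nat.not_lt_zero _ ht

theorem projRow_succ_apply_ne_zero_iff (i m : Fin k) (hi : (i : ℕ) + 1 < k) (j : Fin n) :
    projRow B ⟨(i : ℕ) + 1, hi⟩ m j ≠ 0 ↔ projRow B i i j = 0 ∧ projRow B i m j ≠ 0 := by
  have hprefix : (∃ t, t < (⟨(i : ℕ) + 1, hi⟩ : Fin k) ∧ B t j ≠ 0) ↔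
      (∃ t, t < i ∧ B t j ≠ 0) ∨ B i j ≠ 0 := by
    have hlt : ∀ t : Fin k, t < ⟨(i : ℕ) + 1, hi⟩ ↔ t < i ∨ t = i := fun t => by
      simp only [Fin.lt_def, Fin.ext_iff]
      omega
    simp only [hlt, or_and_right, exists_or, exists_eq_left]
  unfold projRow
  by_cases h : ∃ t, t < i ∧ B t j ≠ 0
  · simp [if_pos (hprefix.mpr (Or.inl h)), if_pos h]
  · by_cases hij : B i j = 0
    · rw [if_neg fun hp => (hprefix.mp hp).elim h (· hij), if_neg h, if_neg h]
      simp [hij]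
    · simp [if_pos (hprefix.mpr (Or.inr hij)), if_neg h, hij]

theorem hammingNorm_projRow_succ [DecidableEq F] (i : Fin k) (hi : (i : ℕ) + 1 < k) :
    hammingNorm (projRow B ⟨(i : ℕ) + 1, hi⟩ ⟨(i : ℕ) + 1, hi⟩) =
      #{j | projRow B i i j = 0 ∧ projRow B i ⟨(i : ℕ) + 1, hi⟩ j ≠ 0} := by
  simp only [hammingNorm, projRow_succ_apply_ne_zero_iff]

theorem sum_hammingNorm_projRow_self_le [DecidableEq F] :
    ∑ i, hammingNorm (projRow B i i) ≤ n := by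
  let supp : Fin k → Finset (Fin n) := fun i => {j | projRow B i i j ≠ 0}
  have hdisj : ∀ i m : Fin k, i < m → Disjoint (supp i) (supp m) := by
    intro i m him
    refine disjoint_left.mpr fun j hi hm => ?_
    simp only [supp, mem_filter, mem_univ, true_and] at hi hm
    exact hm (projRow_apply_eq_zero B him (apply_ne_zero_of_projRow_ne_zero B hi))
  calc ∑ i, hammingNorm (projRow B i i) = #(univ.biUnion supp) := by
        refine (card_biUnion fun i _ m _ him => ?_).symm
        rcases lt_or_gt_of_ne him with h | h
        exacts [hdisj i m h, (hdisj m i h).symm]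
    _ ≤ n := (card_le_univ _).trans_eq (Fintype.card_fin n)

end projRow

namespace IsLLLReduced

variable {F : Type} [Field F] [Fintype F] [DecidableEq F] {k n : ℕ}
  {B : Fin k → Fin n → F}

theorem hammingNorm_projRow_le_card_mul (hB : IsLLLReduced B) (i : Fin k)
    (hi : (i : ℕ) + 1 < k) :
    hammingNorm (projRow B i i) ≤
      Fintype.card F * hammingNorm (projRow B ⟨(i : ℕ) + 1, hi⟩ ⟨(i : ℕ) + 1, hi⟩) := by
  rw [hammingNorm_projRow_succ]
  refine hammingNorm_le_card_mul_of_shortest (hB.2 i hi) ?_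
  rw [← hammingNorm_projRow_succ B i hi]
  exact hammingNorm_ne_zero_iff.mpr (hB.1 _)

theorem hammingNorm_le_card_pow_mul (hB : IsLLLReduced B) (hk : 0 < k) :
    ∀ (i : ℕ) (hi : i < k),
      hammingNorm (B ⟨0, hk⟩) ≤ Fintype.card F ^ i * hammingNorm (projRow B ⟨i, hi⟩ ⟨i, hi⟩)
  | 0, _ => by rw [pow_zero, one_mul, projRow_zero]
  | i + 1, hi =>
    calc hammingNorm (B ⟨0, hk⟩)
        ≤ Fintype.card F ^ i * hammingNorm (projRow B ⟨i, by omega⟩ ⟨i, by omega⟩) :=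
          hammingNorm_le_card_pow_mul hB hk i _
      _ ≤ Fintype.card F ^ i *
            (Fintype.card F * hammingNorm (projRow B ⟨i + 1, hi⟩ ⟨i + 1, hi⟩)) :=
          Nat.mul_le_mul_left _ (hB.hammingNorm_projRow_le_card_mul ⟨i, by omega⟩ hi)
      _ = Fintype.card F ^ (i + 1) * hammingNorm (projRow B ⟨i + 1, hi⟩ ⟨i + 1, hi⟩) := by ring

end IsLLLReduced

/-- An LLL-reduced basis meets the Griesmer bound:
`n ≥ Σ_{i=0}^{k−1} ⌈|b_1| / q^i⌉`. -/
theorem lll_griesmer {F : Type} [Field F] [Fintype F] [DecidableEq F]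
    {k n q : ℕ} (hq : Fintype.card F = q) (hk : 0 < k)
    (B : Fin k → Fin n → F) (hB : IsLLLReduced B) :
    ∑ i ∈ Finset.range k, ⌈(hammingNorm (B ⟨0, hk⟩) : ℚ) / (q : ℚ) ^ i⌉₊ ≤ n := by
  have hq0 : 0 < q := hq ▸ Fintype.card_pos
  calc ∑ i ∈ Finset.range k, ⌈(hammingNorm (B ⟨0, hk⟩) : ℚ) / (q : ℚ) ^ i⌉₊
      ≤ ∑ i : Fin k, hammingNorm (projRow B i i) := by
        rw [← Fin.sum_univ_eq_sum_range]
        refine sum_le_sum fun i _ => ?_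
        rw [Nat.ceil_le, div_le_iff₀ (by positivity), mul_comm]
        exact_mod_cast hq ▸ hB.hammingNorm_le_card_pow_mul hk i i.isLt
    _ ≤ n := sum_hammingNorm_projRow_self_le B
end

section
/- If B = (b_1; ...; b_{β+1}) ∈ F_q^{(β+1)×n} is twin reduced, then |b_{β+1}^+| ≥ ⌈ (q−1)/(q^β − q) · (s_q(|b_1|, β) − |b_1|) ⌉. -/
/-- The repetition number `η(C)`: the maximal size of a redundant set for `C`. -/
noncomputable def eta {F : Type} [Field F] {n : ℕ} (C : Submodule F (Fin n → F)) : ℕ :=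
  sSup {m | ∃ S : Finset (Fin n), Redundant C ↑S ∧ S.card = m}

/-- `minLen F d k` is `s_q(d, k)`: the minimal length `n` such that there exists a linear
code over `F` of length `n`, dimension `k`, and minimum Hamming distance at least `d`. -/
noncomputable def minLen (F : Type) [Field F] [Fintype F] [DecidableEq F] (d k : ℕ) : ℕ :=
  sInf {n | ∃ C : Submodule F (Fin n → F), Module.finrank F C = k ∧
    ∀ c ∈ C, c ≠ 0 → d ≤ hammingNorm c}

/-!
Properness makes `b_1, …, b_β` linearly independent, so by forward reducedness
`C = ⟨b_1, …, b_β⟩` is an `[n, β, |b_1|]` code. Its support lies in `supp b_1 ∪ T`, where `T`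
is the set of coordinates off `supp b_1` at which one of `b_2, …, b_β` is nonzero; puncturing
`C` to its support gives `|T| ≥ s_q(|b_1|, β) − |b_1|`.

On `T` the columns `(b_2, …, b_{β+1})_j` of the projected code `C' = π_2(B_{[2,β+1]})` avoid the
line `W` through the last unit vector, and `F_q^β \ W` meets only `(q^β − q)/(q − 1)` projective
points. By pigeonhole some point carries at least `(q − 1)|T|/(q^β − q)` of these columns, and
coordinates with proportional nonzero columns form a redundant set of `C'`. Backward reducedness
identifies `η(C')` with `|b_{β+1}^+|`.
-/

open Finset

open scoped LinearAlgebra.Projectivization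

namespace Projectivization

variable {F V : Type*} [Field F] [Fintype F] [AddCommGroup V] [Module F V] [Finite V]

theorem card_mul_le_card_compl (W : Submodule F V) (I : Finset (ℙ F V))
    (hI : ∀ p ∈ I, p.rep ∉ W) :
    #I * (Fintype.card F - 1) ≤ Nat.card V - Nat.card W := by
  let φ : I × Fˣ → ((W : Set V)ᶜ : Set V) := fun x =>
    ⟨(x.2 : F) • x.1.1.rep, fun h => hI _ x.1.2 (by simpa using W.smul_mem (x.2⁻¹ : F) h)⟩
  have hφ : Function.Injective φ := by
    rintro ⟨⟨p, hp⟩, a⟩ ⟨⟨p', hp'⟩, a'⟩ h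
    have h : (a : F) • p.rep = (a' : F) • p'.rep := congrArg Subtype.val h
    have hpp : p = p' := by
      rw [← p.mk_rep, ← p'.mk_rep, mk_eq_mk_iff']
      exact ⟨(a : F)⁻¹ * a', by rw [mul_smul, ← h, inv_smul_smul₀ a.ne_zero]⟩
    subst hpp
    simpa using Units.ext (smul_left_injective F p.rep_nonzero h)
  have := Nat.card_le_card_of_injective φ hφ
  rwa [Nat.card_prod, Nat.card_units, Nat.card_eq_fintype_card, Nat.card_eq_fintype_card,
    Fintype.card_coe, Nat.card_coe_set_eq, Set.ncard_compl, ← Nat.card_coe_set_eq] at this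

end Projectivization

theorem Submodule.exists_proportional_subset_of_forall_notMem {F V ι : Type*} [Field F] [Fintype F]
    [AddCommGroup V] [Module F V] [Finite V] (W : Submodule F V) (T : Finset ι) (v : ι → V)
    (hv : ∀ j ∈ T, v j ∉ W) :
    ∃ S ⊆ T, (∀ j ∈ S, ∀ j' ∈ S, ∃ a : F, v j = a • v j') ∧
      #T * (Fintype.card F - 1) ≤ #S * (Nat.card V - Nat.card W) := by
  classical
  rcases T.eq_empty_or_nonempty with rfl | hT
  · exact ⟨∅, empty_subset _, by simp, by simp⟩
  have hv0 : ∀ j ∈ T, v j ≠ 0 := fun j hj h => hv j hj (h ▸ W.zero_mem)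
  let f : T → ℙ F V := fun j => Projectivization.mk F (v j) (hv0 j j.2)
  let fiber : ℙ F V → Finset T := fun p => {j | f j = p}
  obtain ⟨p, -, hp⟩ := (univ.image f).exists_max_image (fun p => #(fiber p)) (by simpa using hT)
  have hpoints : #(univ.image f) * (Fintype.card F - 1) ≤ Nat.card V - Nat.card W := by
    refine Projectivization.card_mul_le_card_compl W _ ?_
    simp only [mem_image, mem_univ, true_and, forall_exists_index]
    rintro _ j rfl hW
    obtain ⟨a, ha⟩ := Projectivization.exists_smul_eq_mk_rep F (v j) (hv0 j j.2)
    change (Projectivization.mk F (v j) _).rep ∈ W at hW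
    rw [← ha] at hW
    exact hv j j.2 ((W.smul_mem_iff_of_isUnit a.isUnit).1 hW)
  refine ⟨(fiber p).map (Function.Embedding.subtype _), ?_, ?_, ?_⟩
  · intro j hj
    obtain ⟨j, -, rfl⟩ := Finset.mem_map.1 hj
    exact j.2
  · simp only [Finset.mem_map, Function.Embedding.subtype_apply]
    rintro _ ⟨j, hj, rfl⟩ _ ⟨j', hj', rfl⟩
    have hjj' : f j = f j' := (mem_filter.1 hj).2.trans (mem_filter.1 hj').2.symm
    obtain ⟨a, ha⟩ := (Projectivization.mk_eq_mk_iff' F _ _ _ _).1 hjj'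
    exact ⟨a, ha.symm⟩
  · calc #T * (Fintype.card F - 1)
        ≤ #(fiber p) * #(univ.image f) * (Fintype.card F - 1) := by
          gcongr
          rw [← card_attach, ← univ_eq_attach]
          exact card_le_mul_card_image _ _ hp
      _ ≤ #(fiber p) * (Nat.card V - Nat.card W) := by
          rw [mul_assoc]
          gcongr
      _ = _ := by rw [card_map]

theorem Submodule.card_le_card_pi_bot {F ι : Type*} [Field F] [Finite F] [Finite ι]
    [DecidableEq ι] {I : Set ι} {i₀ : ι} (hi₀ : i₀ ∉ I) :
    Nat.card F ≤ Nat.card (Submodule.pi I fun _ : ι => (⊥ : Submodule F F)) := by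
  have hsingle (a : F) : Pi.single i₀ a ∈ Submodule.pi I fun _ : ι => (⊥ : Submodule F F) :=
    Submodule.mem_pi.2 fun i hi =>
      (Submodule.mem_bot F).2 (by rw [Pi.single_apply, if_neg (ne_of_mem_of_not_mem hi hi₀)])
  exact Nat.card_le_card_of_injective (fun a => ⟨_, hsingle a⟩)
    fun a b h => Pi.single_injective i₀ (congrArg Subtype.val h)

section Codes

variable {F : Type} [Field F] {n : ℕ}

theorem apply_eq_mul_apply_of_mem_span_range {ι : Type*} {g : ι → Fin n → F} {c : Fin n → F}
    (hc : c ∈ Submodule.span F (Set.range g)) {j j' : Fin n} {a : F}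
    (hg : ∀ i, g i j = a * g i j') : c j = a * c j' := by
  induction hc using Submodule.span_induction with
  | mem x hx => obtain ⟨i, rfl⟩ := hx; exact hg i
  | zero => simp
  | add x y _ _ hx hy => simp [hx, hy, mul_add]
  | smul b x _ hx => simp [hx, mul_left_comm]

theorem redundant_span_range_of_proportional {ι : Type*} (g : ι → Fin n → F)
    (S : Finset (Fin n)) (hS : ∀ j ∈ S, (fun i => g i j) ≠ 0)
    (hprop : ∀ j ∈ S, ∀ j' ∈ S, ∃ a : F, (fun i => g i j) = a • fun i => g i j') :
    Redundant (Submodule.span F (Set.range g)) S := by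
  refine ⟨fun j hj => ?_, fun c hc j hj j' hj' => ?_⟩
  · obtain ⟨i, hi⟩ := Function.ne_iff.1 (hS j hj)
    exact ⟨g i, Submodule.subset_span ⟨i, rfl⟩, hi⟩
  · obtain ⟨a, ha⟩ := hprop j hj j' hj'
    have ha0 : a ≠ 0 := by
      rintro rfl
      exact hS j hj (by simpa using ha)
    rw [apply_eq_mul_apply_of_mem_span_range hc (fun i => congrFun ha i), mul_eq_zero,
      or_iff_right ha0]

theorem Redundant.card_le_eta {C : Submodule F (Fin n → F)} {S : Finset (Fin n)}
    (hS : Redundant C S) : #S ≤ eta C :=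
  le_csSup ⟨n, by rintro _ ⟨S', -, rfl⟩; simpa using S'.card_le_univ⟩ ⟨S, hS, rfl⟩

end Codes

theorem minLen_le_card_of_forall_notMem_eq_zero {F : Type} [Field F] [Fintype F]
    [DecidableEq F] {n d : ℕ} (C : Submodule F (Fin n → F)) (U : Finset (Fin n))
    (hU : ∀ c ∈ C, ∀ j ∉ U, c j = 0) (hd : ∀ c ∈ C, c ≠ 0 → d ≤ hammingNorm c) :
    minLen F d (Module.finrank F C) ≤ #U := by
  let puncture : (Fin n → F) →ₗ[F] (Fin #U → F) :=
    LinearMap.funLeft F F fun k => (U.equivFin.symm k : Fin n)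
  have hweight : ∀ c ∈ C, hammingNorm (puncture c) = hammingNorm c := by
    intro c hc
    refine card_bij (fun k _ => (U.equivFin.symm k : Fin n))
      (fun k hk => by simp only [Finset.mem_filter, mem_univ, true_and] at hk ⊢; exact hk)
      (fun k _ k' _ h => U.equivFin.symm.injective (Subtype.ext h)) fun j hj => ?_
    have hjU : j ∈ U := by
      by_contra hjU
      exact (mem_filter.1 hj).2 (hU c hc j hjU)
    refine ⟨U.equivFin ⟨j, hjU⟩, Finset.mem_filter.2 ⟨mem_univ _, ?_⟩, by simp⟩
    simpa [puncture] using hj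
  have hinj : Function.Injective (puncture ∘ₗ C.subtype) := by
    rw [← LinearMap.ker_eq_bot, LinearMap.ker_eq_bot']
    intro c hc
    rw [← Submodule.coe_eq_zero, ← hammingNorm_eq_zero, ← hweight c c.2]
    exact hammingNorm_eq_zero.2 hc
  refine Nat.sInf_le ⟨LinearMap.range (puncture ∘ₗ C.subtype),
    LinearMap.finrank_range_of_inj hinj, ?_⟩
  rintro _ ⟨c, rfl⟩ hc
  have hc0 : (c : Fin n → F) ≠ 0 := by
    rintro h
    exact hc (by simp [h])
  simpa [hweight c c.2] using hd c c.2 hc0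

section Epipodal

variable {F : Type} [Field F] {k n : ℕ}

theorem linearIndependent_of_projRow_self_ne_zero (B : Fin k → Fin n → F)
    (hB : ∀ i, projRow B i i ≠ 0) : LinearIndependent F B := by
  classical
  rw [Fintype.linearIndependent_iff]
  by_contra! hdep
  obtain ⟨lam, hsum, hne⟩ := hdep
  have hsupp : ({i | lam i ≠ 0} : Finset (Fin k)).Nonempty := by
    simpa [Finset.Nonempty] using hne
  set t := ({i | lam i ≠ 0} : Finset (Fin k)).max' hsupp
  have ht : lam t ≠ 0 := by simpa using max'_mem _ hsupp
  refine hB t (funext fun j => ?_)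
  simp only [projRow, Pi.zero_apply, ite_eq_left_iff, not_exists, not_and, not_not]
  intro hbefore
  have hj : ∑ i, lam i * B i j = lam t * B t j := by
    refine sum_eq_single t (fun i _ hit => ?_) (by simp)
    rcases lt_or_gt_of_ne hit with hlt | hgt
    · rw [hbefore i hlt, mul_zero]
    · have : lam i = 0 := by
        by_contra hi
        exact (le_max' _ i (by simpa using hi)).not_gt hgt
      rw [this, zero_mul]
  have h0 : ∑ i, lam i * B i j = 0 := by simpa using congrFun hsum j
  exact (mul_eq_zero.1 (hj ▸ h0)).resolve_left ht

theorem projRow_one_apply_of_eq_zero (B : Fin (k + 1) → Fin n → F) (m : Fin (k + 1))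
    {j : Fin n} (hj : B 0 j = 0) : projRow B 1 m j = B m j := by
  rw [projRow, if_neg]
  rintro ⟨t, ht, hne⟩
  have : t = 0 := by
    cases k with
    | zero => exact Fin.fin_one_eq_zero t
    | succ k => exact (Fin.lt_one_iff t).1 ht
  exact hne (this ▸ hj)

theorem apply_eq_zero_of_mem_span_castSucc {F : Type} [Field F] {β n : ℕ}
    (B : Fin (β + 1) → Fin n → F) {c : Fin n → F}
    (hc : c ∈ Submodule.span F (Set.range (B ∘ Fin.castSucc))) {j : Fin n} (h0 : B 0 j = 0)
    (hsucc : ∀ i : Fin β, (i : ℕ) + 1 < β → projRow B 1 i.succ j = 0) : c j = 0 := by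
  have hrow (i : Fin β) : B i.castSucc j = 0 := by
    rcases Fin.eq_zero_or_eq_succ i.castSucc with h | ⟨i', hi'⟩
    · rw [h, h0]
    · have hlt : (i' : ℕ) + 1 < β := by
        have := congrArg Fin.val hi'
        simp only [Fin.val_castSucc, Fin.val_succ] at this
        omega
      rw [hi', ← projRow_one_apply_of_eq_zero B _ h0]
      exact hsucc i' hlt
  simpa using apply_eq_mul_apply_of_mem_span_range hc (j' := j) (a := 0) (by simpa using hrow)

end Epipodal

theorem ceil_div_mul_sub_le {q β s d t S : ℕ} (hq : 1 < q) (hβ : 2 ≤ β) (hs : s ≤ d + t)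
    (ht : t * (q - 1) ≤ S * (q ^ β - q)) :
    ⌈((q : ℚ) - 1) / ((q : ℚ) ^ β - q) * ((s : ℚ) - d)⌉₊ ≤ S := by
  have hqβ : q < q ^ β := lt_self_pow₀ hq (by omega)
  have hden : (0 : ℚ) < (q : ℚ) ^ β - q := sub_pos.2 (by exact_mod_cast hqβ)
  have hst : (s : ℚ) - d ≤ t := by
    have : (s : ℚ) ≤ d + t := by exact_mod_cast hs
    linarith
  have ht' : (t : ℚ) * (q - 1) ≤ S * ((q : ℚ) ^ β - q) := by
    have := (Nat.cast_le (α := ℚ)).2 ht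
    push_cast [Nat.cast_sub hq.le, Nat.cast_sub hqβ.le] at this
    exact this
  rw [Nat.ceil_le]
  calc ((q : ℚ) - 1) / ((q : ℚ) ^ β - q) * ((s : ℚ) - d)
      ≤ ((q : ℚ) - 1) / ((q : ℚ) ^ β - q) * t := by
        have : (1 : ℚ) ≤ q := by exact_mod_cast hq.le
        exact mul_le_mul_of_nonneg_left hst (div_nonneg (by linarith) hden.le)
    _ ≤ S := by rwa [div_mul_eq_mul_div, div_le_iff₀ hden, mul_comm]

/-- If `B = (b_1; …; b_{β+1})` is twin reduced (proper, `B_{[1,β]}` forward reduced,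
`B_{[2,β+1]}` backward reduced), then
`|b_{β+1}^+| ≥ ⌈(q−1)/(q^β − q) · (s_q(|b_1|, β) − |b_1|)⌉`. -/
theorem twin_reduced_last_epipodal {F : Type} [Field F] [Fintype F] [DecidableEq F]
    {n q β : ℕ} (hq : Fintype.card F = q) (hβ : 2 ≤ β)
    (B : Fin (β + 1) → Fin n → F)
    (hproper : ∀ i, projRow B i i ≠ 0)
    (hfwd : ∀ c ∈ Submodule.span F {v | ∃ m : Fin (β + 1), (m : ℕ) < β ∧ v = B m},
      c ≠ 0 → hammingNorm (B 0) ≤ hammingNorm c)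
    (hbwd : hammingNorm (projRow B (Fin.last β) (Fin.last β)) =
      eta (Submodule.span F {v | ∃ m : Fin (β + 1), 0 < m ∧ v = projRow B 1 m})) :
    ⌈(((q : ℚ) - 1) / ((q : ℚ) ^ β - q)) *
        ((minLen F (hammingNorm (B 0)) β : ℚ) - (hammingNorm (B 0) : ℚ))⌉₊ ≤
      hammingNorm (projRow B (Fin.last β) (Fin.last β)) := by
  classical
  set d := hammingNorm (B 0)
  let g : Fin β → Fin n → F := fun i => projRow B 1 i.succ
  let W : Submodule F (Fin β → F) := Submodule.pi {i | (i : ℕ) + 1 < β} fun _ => ⊥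
  let T : Finset (Fin n) := {j | B 0 j = 0 ∧ (fun i => g i j) ∉ W}
  have hfwd_span : {v | ∃ m : Fin (β + 1), (m : ℕ) < β ∧ v = B m} =
      Set.range (B ∘ Fin.castSucc) := by
    ext v
    simp [Fin.exists_fin_succ', eq_comm]
  have hbwd_span : {v | ∃ m : Fin (β + 1), 0 < m ∧ v = projRow B 1 m} = Set.range g := by
    ext v
    simp [Fin.exists_fin_succ, eq_comm, g]
  have hrank : Module.finrank F (Submodule.span F (Set.range (B ∘ Fin.castSucc))) = β := by
    rw [finrank_span_eq_card ((linearIndependent_of_projRow_self_ne_zero B hproper).comp _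
      (Fin.castSucc_injective β)), Fintype.card_fin]
  have hlen : minLen F d β ≤ d + #T := by
    refine hrank ▸ (minLen_le_card_of_forall_notMem_eq_zero _ (({j | B 0 j ≠ 0} : Finset _) ∪ T)
      (fun c hc j hj => ?_) (hfwd_span ▸ hfwd)).trans (card_union_le _ _)
    obtain ⟨h0, hcol⟩ : B 0 j = 0 ∧ (B 0 j = 0 → (fun i => g i j) ∈ W) := by
      simpa [T, not_or] using hj
    exact apply_eq_zero_of_mem_span_castSucc B hc h0
      fun i hi => (Submodule.mem_bot F).1 (Submodule.mem_pi.1 (hcol h0) i hi)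
  obtain ⟨S, hST, hprop, hS⟩ := W.exists_proportional_subset_of_forall_notMem T
    (fun j i => g i j) fun j hj => (mem_filter.1 hj).2.2
  have hW : Fintype.card F ≤ Nat.card W := by
    rw [← Nat.card_eq_fintype_card]
    exact Submodule.card_le_card_pi_bot (i₀ := (⟨β - 1, by omega⟩ : Fin β)) (by simp; omega)
  have hred : Redundant (Submodule.span F (Set.range g)) S :=
    redundant_span_range_of_proportional g S
      (fun j hj h => (mem_filter.1 (hST hj)).2.2 (h ▸ W.zero_mem)) hprop
  rw [hbwd, hbwd_span]
  refine (ceil_div_mul_sub_le (hq ▸ Fintype.one_lt_card) hβ hlen ?_).trans hred.card_le_eta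
  rw [Nat.card_fun, Nat.card_eq_fintype_card, hq, Nat.card_fin] at hS
  exact hS.trans (Nat.mul_le_mul_left _ (Nat.sub_le_sub_left (hq ▸ hW) _))
end

section
/- For positive integers n and k ≥ 2 with k ≤ n ≤ k^5 − 1, a uniformly random matrix B in F_2^{k×n} generates a code with minimum distance d_min(C(B)) > (n−k)/(10·log₂ k) with probability at least 1 − 2^{−(n−k)/2}. -/
/-!
Union bound. `B` fails exactly when `zᵀB` lies in the Hamming ball of radius
`D = ⌊(n - k) / (10 log₂ k)⌋` for some `z ≠ 0`. For fixed `z ≠ 0` the map `B ↦ zᵀB` is a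
surjective linear map, so `zᵀB` is uniform on `F₂ⁿ` and lands in that ball with probability
at most `(n + 1)^D / 2^n`. Summing over the `2^k` vectors `z` bounds the failure probability by
`2^k (n + 1)^D / 2^n`, and `n + 1 ≤ k^5` gives `(n + 1)^D ≤ 2^((n - k) / 2)`.
-/

open Finset Matrix

theorem Nat.sum_range_choose_le_succ_pow (n D : ℕ) :
    ∑ i ∈ range (D + 1), n.choose i ≤ (n + 1) ^ D := by
  induction D with
  | zero => simp
  | succ D ih =>
    calc ∑ i ∈ range (D + 2), n.choose i
        = ∑ i ∈ range (D + 1), n.choose i + n.choose (D + 1) := sum_range_succ _ _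
      _ ≤ (n + 1) ^ D + (n + 1) ^ D * n := by
        gcongr
        calc n.choose (D + 1) ≤ n ^ (D + 1) := Nat.choose_le_pow _ _
          _ = n ^ D * n := pow_succ _ _
          _ ≤ (n + 1) ^ D * n := by gcongr; omega
      _ = (n + 1) ^ (D + 1) := by ring

theorem Finset.card_filter_card_le_le_pow {ι : Type*} [Fintype ι] (D : ℕ) :
    #{s : Finset ι | #s ≤ D} ≤ (Fintype.card ι + 1) ^ D := by
  classical
  calc #{s : Finset ι | #s ≤ D}
      ≤ #((range (D + 1)).biUnion fun i => powersetCard i (univ : Finset ι)) := by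
        refine card_le_card fun s hs => ?_
        simp only [mem_filter, mem_univ, true_and] at hs
        simp only [mem_biUnion, mem_range, mem_powersetCard]
        exact ⟨#s, Nat.lt_succ_of_le hs, subset_univ s, rfl⟩
    _ ≤ ∑ i ∈ range (D + 1), #(powersetCard i (univ : Finset ι)) := card_biUnion_le
    _ = ∑ i ∈ range (D + 1), (Fintype.card ι).choose i := by
        simp only [card_powersetCard, card_univ]
    _ ≤ (Fintype.card ι + 1) ^ D := Nat.sum_range_choose_le_succ_pow _ _

theorem card_filter_hammingNorm_le_le_pow {ι : Type*} [Fintype ι] [DecidableEq ι] (D : ℕ) :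
    #{v : ι → ZMod 2 | hammingNorm v ≤ D} ≤ (Fintype.card ι + 1) ^ D := by
  refine le_trans (card_le_card_of_injOn (fun v => ({i | v i ≠ 0} : Finset ι)) ?_ ?_)
    (card_filter_card_le_le_pow D)
  · intro v hv
    simpa [hammingNorm] using hv
  · intro v _ w _ hvw
    funext i
    have hi := Finset.ext_iff.mp hvw i
    simp only [mem_filter, mem_univ, true_and] at hi
    revert hi
    generalize v i = a
    generalize w i = b
    decide +revert

theorem AddMonoidHom.card_filter_comp_mul_card_eq {G H : Type*} [AddGroup G] [Fintype G]
    [AddGroup H] [Fintype H] [DecidableEq H] (f : G →+ H) (hf : Function.Surjective f)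
    (p : H → Prop) [DecidablePred p] :
    #{x | p (f x)} * Fintype.card H = #{y | p y} * Fintype.card G := by
  set c := #{x | f x = 0}
  have hfiber : ∀ y, #{x | f x = y} = c := fun y =>
    AddMonoidHom.card_fiber_eq_of_mem_range f (hf y) (hf 0)
  have hp : #{x | p (f x)} = #{y | p y} * c := by
    rw [card_eq_sum_card_fiberwise (f := f) (t := {y | p y}) (fun x hx => by simpa using hx),
      sum_const_nat fun y hy => ?_]
    rw [filter_filter, ← hfiber y]
    congr 1
    ext x
    simp only [mem_filter, mem_univ, true_and] at hy ⊢
    exact ⟨And.right, fun hx => ⟨hx ▸ hy, hx⟩⟩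
  have hG : Fintype.card G = Fintype.card H * c := by
    rw [← card_univ, card_eq_sum_card_fiberwise (f := f) (t := univ) (fun _ _ => mem_univ _),
      sum_const_nat fun y _ => by simpa using hfiber y, card_univ]
  rw [hp, hG]
  ring

theorem Matrix.vecMul_surjective {K m n : Type*} [DivisionRing K] [Fintype m] [DecidableEq m]
    {z : m → K} (hz : z ≠ 0) : Function.Surjective fun B : Matrix m n K => z ᵥ* B := by
  obtain ⟨i, hi⟩ := Function.ne_iff.mp hz
  refine fun v => ⟨vecMulVec (Pi.single i (z i)⁻¹) v, ?_⟩
  simp [vecMul_vecMulVec, dotProduct_single, mul_inv_cancel₀ hi]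

theorem Matrix.card_eq_pow {K m n : Type*} [Fintype K] [Fintype m] [DecidableEq m] [Fintype n]
    [DecidableEq n] :
    Fintype.card (Matrix m n K) = Fintype.card K ^ (Fintype.card m * Fintype.card n) := by
  rw [pow_mul', ← Fintype.card_fun, ← Fintype.card_fun]
  rfl

theorem Matrix.card_filter_exists_vecMul_mul_le {K m n : Type*} [DivisionRing K] [Fintype K]
    [DecidableEq K] [Fintype m] [DecidableEq m] [Fintype n] [DecidableEq n]
    (p : (n → K) → Prop) [DecidablePred p] :
    #{B : Matrix m n K | ∃ z ≠ 0, p (z ᵥ* B)} * Fintype.card (n → K) ≤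
      Fintype.card (m → K) * (#{v | p v} * Fintype.card (Matrix m n K)) := by
  calc #{B : Matrix m n K | ∃ z ≠ 0, p (z ᵥ* B)} * Fintype.card (n → K)
      ≤ (∑ z ∈ {z : m → K | z ≠ 0}, #{B : Matrix m n K | p (z ᵥ* B)}) *
          Fintype.card (n → K) := by
        gcongr
        refine le_trans (card_le_card fun B hB => ?_) card_biUnion_le
        simpa using hB
    _ = ∑ z ∈ {z : m → K | z ≠ 0}, #{v | p v} * Fintype.card (Matrix m n K) := by
        rw [sum_mul]
        refine sum_congr rfl fun z hz => ?_
        exact (AddMonoidHom.mk' (z ᵥ* ·) (vecMul_add · · z)).card_filter_comp_mul_card_eq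
          (vecMul_surjective (by simpa using hz)) p
    _ ≤ Fintype.card (m → K) * (#{v | p v} * Fintype.card (Matrix m n K)) := by
        rw [sum_const, smul_eq_mul]
        gcongr
        exact card_filter_le _ _

theorem pow_floor_div_logb_le {a b d : ℝ} (hb : 1 < b) (ha : 1 ≤ a) (hab : a ≤ b ^ 5)
    (hd : 0 ≤ d) : a ^ ⌊d / (10 * Real.logb 2 b)⌋₊ ≤ 2 ^ (d / 2) := by
  have hL : 0 < Real.logb 2 b := Real.logb_pos one_lt_two hb
  have hlog : Real.logb 2 a ≤ 5 * Real.logb 2 b := by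
    calc Real.logb 2 a ≤ Real.logb 2 (b ^ 5) :=
          Real.logb_le_logb_of_le one_lt_two (by linarith) hab
      _ = 5 * Real.logb 2 b := by rw [Real.logb_pow]; norm_num
  calc a ^ ⌊d / (10 * Real.logb 2 b)⌋₊
      ≤ a ^ (d / (10 * Real.logb 2 b)) := by
        rw [← Real.rpow_natCast]
        exact Real.rpow_le_rpow_of_exponent_le ha (Nat.floor_le (by positivity))
    _ = 2 ^ (Real.logb 2 a * (d / (10 * Real.logb 2 b))) := by
        rw [Real.rpow_mul zero_le_two, Real.rpow_logb two_pos (by norm_num) (by linarith)]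
    _ ≤ 2 ^ (5 * Real.logb 2 b * (d / (10 * Real.logb 2 b))) := by
        gcongr
        norm_num
    _ = 2 ^ (d / 2) := by
        congr 1
        field_simp
        ring

theorem card_filter_exists_hammingNorm_vecMul_le_mul_le (k n D : ℕ) :
    #{B : Matrix (Fin k) (Fin n) (ZMod 2) | ∃ z ≠ 0, hammingNorm (z ᵥ* B) ≤ D} * 2 ^ n ≤
      2 ^ k * ((n + 1) ^ D * 2 ^ (k * n)) := by
  have h := card_filter_exists_vecMul_mul_le (K := ZMod 2) (m := Fin k) (n := Fin n)
    (hammingNorm · ≤ D)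
  simp only [card_eq_pow, Fintype.card_fun, Fintype.card_fin, ZMod.card] at h
  refine h.trans ?_
  gcongr
  simpa using card_filter_hammingNorm_le_le_pow (ι := Fin n) D

theorem card_filter_exists_hammingNorm_vecMul_le_floor_le {n k : ℕ} (hk : 2 ≤ k) (hkn : k ≤ n)
    (hn : n + 1 ≤ k ^ 5) :
    (#{B : Matrix (Fin k) (Fin n) (ZMod 2) |
        ∃ z ≠ 0, hammingNorm (z ᵥ* B) ≤ ⌊((n : ℝ) - k) / (10 * Real.logb 2 k)⌋₊} : ℝ) ≤
      2 ^ (-(((n : ℝ) - k) / 2)) * 2 ^ (k * n) := by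
  have hnk : (0 : ℝ) ≤ n - k := by simpa using hkn
  have hball :
      ((n : ℝ) + 1) ^ ⌊((n : ℝ) - k) / (10 * Real.logb 2 k)⌋₊ ≤ 2 ^ (((n : ℝ) - k) / 2) :=
    pow_floor_div_logb_le (by exact_mod_cast hk) (by simp) (by exact_mod_cast hn) hnk
  have hexp : (2 : ℝ) ^ k * 2 ^ (((n : ℝ) - k) / 2) = 2 ^ (-(((n : ℝ) - k) / 2)) * 2 ^ n := by
    rw [← Real.rpow_natCast, ← Real.rpow_natCast, ← Real.rpow_add two_pos,
      ← Real.rpow_add two_pos]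
    ring_nf
  refine le_of_mul_le_mul_right ?_ (by positivity : (0 : ℝ) < 2 ^ n)
  calc _ ≤ (2 : ℝ) ^ k *
          (((n : ℝ) + 1) ^ ⌊((n : ℝ) - k) / (10 * Real.logb 2 k)⌋₊ * 2 ^ (k * n)) := by
        exact_mod_cast card_filter_exists_hammingNorm_vecMul_le_mul_le k n _
    _ ≤ 2 ^ k * (2 ^ (((n : ℝ) - k) / 2) * 2 ^ (k * n)) := by gcongr
    _ = _ := by rw [← mul_assoc, hexp]; ring

/-- For `2 ≤ k ≤ n ≤ k^5 − 1`, a uniformly random matrix `B ∈ F_2^{k×n}` generates a code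
with minimum distance greater than `(n−k)/(10·log₂ k)` with probability at least
`1 − 2^{−(n−k)/2}`, stated here by counting matrices.  (The minimum distance condition is
expressed as: every nonzero row combination `zᵀB` has Hamming weight exceeding the bound,
which in particular forces `B` to have full row rank.) -/
theorem random_code_min_distance (n k : ℕ) (hk : 2 ≤ k) (hkn : k ≤ n)
    (hn : n ≤ k ^ 5 - 1) :
    (1 - (2 : ℝ) ^ (-(((n : ℝ) - (k : ℝ)) / 2))) * 2 ^ (k * n) ≤
      Nat.card {B : Matrix (Fin k) (Fin n) (ZMod 2) //
        ∀ z : Fin k → ZMod 2, z ≠ 0 →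
          ((n : ℝ) - (k : ℝ)) / (10 * Real.logb 2 k) <
            (hammingNorm (Matrix.vecMul z B) : ℝ)} := by
  classical
  set d := ((n : ℝ) - k) / (10 * Real.logb 2 k)
  have hd : 0 ≤ d := div_nonneg (by simpa using hkn)
    (by have := Real.logb_pos one_lt_two (by exact_mod_cast hk : (1 : ℝ) < k); positivity)
  set bad := fun B : Matrix (Fin k) (Fin n) (ZMod 2) =>
    ∃ z ≠ 0, hammingNorm (z ᵥ* B) ≤ ⌊d⌋₊
  have hgood (B : Matrix (Fin k) (Fin n) (ZMod 2)) :
      (∀ z ≠ 0, d < hammingNorm (z ᵥ* B)) ↔ ¬ bad B := by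
    simp [bad, Nat.le_floor_iff hd]
  have hsplit : #{B | bad B} + #{B | ¬ bad B} = 2 ^ (k * n) := by
    simpa [card_eq_pow] using card_filter_add_card_filter_not (s := univ) bad
  have hbad : (#{B | bad B} : ℝ) ≤ 2 ^ (-(((n : ℝ) - k) / 2)) * 2 ^ (k * n) :=
    card_filter_exists_hammingNorm_vecMul_le_floor_le hk hkn (by omega)
  rw [Nat.card_eq_fintype_card, Fintype.card_congr (Equiv.subtypeEquivRight hgood),
    Fintype.card_subtype]
  have hsplitℝ := congrArg (Nat.cast (R := ℝ)) hsplit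
  push_cast at hsplitℝ
  linarith
end
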